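/- There is no run of 6 consecutive positive integers each having exactly 6p divisors, where p > 3 is prime. Equivalently, M(6p) ≤ 5 for all primes p > 3. -/
import Mathlib

open Nat

local notation "τ " n:max => Finset.card (Nat.divisors n)

lemma tau_prime_pow {q k : ℕ} (hq : q.Prime) : τ (q ^ k) = k + 1 := by
  rw [← ArithmeticFunction.sigma_zero_apply, ArithmeticFunction.sigma_zero_apply_prime_pow hq]

lemma two_le_tau {n : ℕ} (hn : 1 < n) : 2 ≤ τ n := by
  have h1 : (1 : ℕ) ∈ n.divisors := Nat.one_mem_divisors.2 (by omega)
  have h2 : n ∈ n.divisors := Nat.mem_divisors_self n (by omega)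
  have hs : ({1, n} : Finset ℕ) ⊆ n.divisors := by
    intro x hx; simp at hx; rcases hx with h | h <;> subst h <;> assumption
  calc 2 = ({1, n} : Finset ℕ).card := by
        rw [Finset.card_insert_of_notMem (by simp; omega), Finset.card_singleton]
  _ ≤ _ := Finset.card_le_card hs

lemma tau_eq_one {n : ℕ} (hn : n ≠ 0) (h : τ n = 1) : n = 1 := by
  by_contra h1
  have := two_le_tau (n := n) (by omega)
  omega

-- decomposition: τ n = (v_q(n)+1) * τ(ordCompl)
lemma tau_ord {q n : ℕ} (hq : q.Prime) (hn : n ≠ 0) :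
    τ n = (n.factorization q + 1) * τ (ordCompl[q] n) := by
  conv_lhs => rw [← Nat.ordProj_mul_ordCompl_eq_self n q]
  rw [Nat.Coprime.card_divisors_mul, tau_prime_pow hq]
  exact Nat.coprime_ordCompl hq hn |>.pow_left _

lemma sq_of_even_factorization {n : ℕ} (hn : n ≠ 0)
    (h : ∀ q, Even (n.factorization q)) : ∃ c, n = c ^ 2 := by
  refine ⟨n.factorization.prod fun q e => q ^ (e / 2), ?_⟩
  conv_lhs => rw [← Nat.factorization_prod_pow_eq_self hn]
  rw [Finsupp.prod, Finsupp.prod, ← Finset.prod_pow]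
  refine Finset.prod_congr rfl fun q hq => ?_
  rw [← pow_mul]
  congr 1
  have := (h q).two_dvd
  omega

lemma sq_of_odd_tau {n : ℕ} (hn : n ≠ 0) (h : Odd (τ n)) : ∃ c, n = c ^ 2 := by
  refine sq_of_even_factorization hn fun q => ?_
  by_contra hodd
  rw [Nat.not_even_iff_odd] at hodd
  rw [Nat.card_divisors hn] at h
  have hq : q ∈ n.primeFactors := by
    rw [← Nat.support_factorization, Finsupp.mem_support_iff]
    intro h0
    rw [h0] at hodd
    exact (Nat.not_odd_iff_even.2 Even.zero) hodd
  have h2 : 2 ∣ n.factorization q + 1 := by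
    rcases hodd with ⟨k, hk⟩; exact ⟨k + 1, by omega⟩
  have : 2 ∣ n.primeFactors.prod (n.factorization · + 1) :=
    h2.trans (Finset.dvd_prod_of_mem _ hq)
  rw [Nat.odd_iff] at h
  omega

-- if τ n is prime P then n = q ^ (P-1)
lemma tau_eq_prime {n P : ℕ} (hn : n ≠ 0) (hP : P.Prime) (h : τ n = P) :
    ∃ q, q.Prime ∧ n = q ^ (P - 1) := by
  have hn1 : n ≠ 1 := by rintro rfl; simp at h; exact hP.ne_one h.symm
  have hq : n.minFac.Prime := Nat.minFac_prime hn1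
  have hd := tau_ord hq hn
  rw [h] at hd
  have hf1 : 1 ≤ n.factorization n.minFac := by
    rw [← Nat.Prime.dvd_iff_one_le_factorization hq hn]
    exact Nat.minFac_dvd n
  have hdvd : (n.factorization n.minFac + 1) ∣ P := Dvd.intro _ hd.symm
  rcases (Nat.Prime.eq_one_or_self_of_dvd hP _ hdvd) with h1 | h1
  · omega
  · rw [h1] at hd
    have ht : τ (ordCompl[n.minFac] n) = 1 :=
      Nat.eq_of_mul_eq_mul_left hP.pos (by omega)
    have hc1 : ordCompl[n.minFac] n = 1 :=
      tau_eq_one (Nat.ordCompl_pos n.minFac hn).ne' ht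
    refine ⟨n.minFac, hq, ?_⟩
    have := Nat.ordProj_mul_ordCompl_eq_self n n.minFac
    rw [hc1, mul_one] at this
    have hfP : n.factorization n.minFac = P - 1 := by omega
    rw [hfP] at this
    exact this.symm

lemma prime_of_tau_two {n : ℕ} (hn : n ≠ 0) (h : τ n = 2) : n.Prime := by
  obtain ⟨q, hq, rfl⟩ := tau_eq_prime hn Nat.prime_two h
  simpa using hq

lemma sq_prime_of_tau_three {n : ℕ} (hn : n ≠ 0) (h : τ n = 3) :
    ∃ q, q.Prime ∧ n = q ^ 2 := tau_eq_prime hn Nat.prime_three h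

-- decomposition as q^f * c
lemma ord_split {n q : ℕ} (hq : q.Prime) (hn : n ≠ 0) (hdvd : q ∣ n) :
    ∃ f c, 1 ≤ f ∧ ¬ q ∣ c ∧ c ≠ 0 ∧ n = q ^ f * c ∧ τ n = (f + 1) * τ c := by
  refine ⟨n.factorization q, ordCompl[q] n, ?_, Nat.not_dvd_ordCompl hq hn,
    (Nat.ordCompl_pos q hn).ne', (Nat.ordProj_mul_ordCompl_eq_self n q).symm, tau_ord hq hn⟩
  rw [← Nat.Prime.dvd_iff_one_le_factorization hq hn]
  exact hdvd

-- classification for τ = 6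
lemma tau_eq_six {n : ℕ} (hn : n ≠ 0) (h : τ n = 6) :
    (∃ q, q.Prime ∧ n = q ^ 5) ∨
    (∃ q r, q.Prime ∧ r.Prime ∧ q ≠ r ∧ n = q ^ 2 * r) := by
  have hn1 : n ≠ 1 := by rintro rfl; simp at h
  obtain ⟨q, hq, hqdvd⟩ : ∃ q, q.Prime ∧ q ∣ n :=
    ⟨n.minFac, Nat.minFac_prime hn1, Nat.minFac_dvd n⟩
  obtain ⟨f, c, hf1, hqc, hcpos, hself, hd⟩ := ord_split hq hn hqdvd
  rw [h] at hd
  have htaupos : 1 ≤ τ c := by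
    by_contra hτ
    have : τ c = 0 := by omega
    rw [this] at hd; omega
  have hfub : f ≤ 5 := by
    have : (f + 1) ∣ 6 := Dvd.intro _ hd.symm
    have := Nat.le_of_dvd (by norm_num) this
    omega
  interval_cases f
  · -- f = 1 : τ c = 3
    have htc : τ c = 3 := by omega
    obtain ⟨r, hr, hc⟩ := sq_prime_of_tau_three hcpos htc
    right
    refine ⟨r, q, hr, hq, ?_, ?_⟩
    · rintro rfl; exact hqc (hc ▸ dvd_pow_self r two_ne_zero)
    · rw [hself, hc]; ring
  · -- f = 2 : τ c = 2
    have htc : τ c = 2 := by omega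
    have hr := prime_of_tau_two hcpos htc
    right
    exact ⟨q, c, hq, hr, fun hqr => hqc (hqr ▸ dvd_refl _), hself⟩
  · omega
  · omega
  · -- f = 5 : τ c = 1
    have htc : τ c = 1 := by omega
    have hc1 := tau_eq_one hcpos htc
    left
    exact ⟨q, hq, by rw [hself, hc1, mul_one]⟩

-- q || n and τ n = 2 * (odd) implies n = q * c^2
lemma eq_prime_mul_sq {n q M : ℕ} (hq : q.Prime) (hn : n ≠ 0)
    (h1 : q ∣ n) (h2 : ¬ q ^ 2 ∣ n) (hτ : Finset.card (Nat.divisors n) = 2 * M) (hM : Odd M) :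
    ∃ c, ¬ q ∣ c ∧ n = q * c ^ 2 := by
  obtain ⟨f, c0, hf1, hqc, hc0, hself, hd⟩ := ord_split hq hn h1
  have hf : f = 1 := by
    by_contra hf2
    exact h2 (hself ▸ Dvd.dvd.mul_right (pow_dvd_pow q (by omega)) c0)
  subst hf
  rw [hτ] at hd
  have hcM : Finset.card (Nat.divisors c0) = M := by omega
  obtain ⟨c, hc⟩ := sq_of_odd_tau hc0 (hcM ▸ hM)
  subst hc
  exact ⟨c, fun hdvd => hqc (Dvd.dvd.trans hdvd (dvd_pow_self c two_ne_zero)),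
    by rw [hself, pow_one]⟩

lemma odd_sq_mod8 {x : ℕ} (h : x % 2 = 1) : x ^ 2 % 8 = 1 := by
  have h8 : x % 8 % 2 = x % 2 := Nat.mod_mod_of_dvd x (by norm_num)
  have hlt : x % 8 < 8 := Nat.mod_lt _ (by norm_num)
  rw [Nat.pow_mod]
  interval_cases h' : x % 8 <;> omega

lemma ineq9 : ∀ j : ℕ, 9 * 4 ^ (j + 1) + 2 < 5 ^ (j + 3) := by
  intro j
  induction j with
  | zero => norm_num
  | succ k ih =>
    have h4 : 9 * 4 ^ (k + 1 + 1) + 2 ≤ 4 * (9 * 4 ^ (k + 1) + 2) := by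
      rw [pow_succ 4 (k + 1)]; omega
    calc 9 * 4 ^ (k + 1 + 1) + 2 ≤ 4 * (9 * 4 ^ (k + 1) + 2) := h4
      _ < 4 * 5 ^ (k + 3) := by omega
      _ < 5 * 5 ^ (k + 3) := by have : 0 < 5 ^ (k + 3) := pow_pos (by norm_num) _; omega
      _ = 5 ^ (k + 1 + 3) := by rw [← pow_succ']

-- lower bound for x with τ(x²) = 3p, x coprime to 6
lemma x_lower_bound {p x : ℕ} (hp : p.Prime) (hp3 : 3 < p)
    (h2 : ¬ 2 ∣ x) (h3 : ¬ 3 ∣ x)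
    (hτ : Finset.card (Nat.divisors (x ^ 2)) = 3 * p) :
    5 ^ ((p + 1) / 2) ≤ x := by
  have hpodd : p % 2 = 1 := by rcases hp.eq_two_or_odd with h | h <;> omega
  have hx0 : x ≠ 0 := by rintro rfl; rw [pow_two, Nat.zero_mul] at hτ; simp at hτ; omega
  have hx2 : x ^ 2 ≠ 0 := pow_ne_zero _ hx0
  have xpos : 0 < x := by omega
  have prime5 : ∀ r, r.Prime → r ∣ x → 5 ≤ r := by
    intro r hr hrx
    have h2r := hr.two_le
    by_contra hlt
    interval_cases r
    · exact h2 hrx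
    · exact h3 hrx
    · exact absurd hr (by norm_num)
  have hdvd : p ∣ Finset.prod (x ^ 2).primeFactors ((x ^ 2).factorization · + 1) := by
    rw [← Nat.card_divisors hx2, hτ]; exact ⟨3, by ring⟩
  obtain ⟨q, hqmem, hqdvd⟩ := (Nat.Prime.prime hp).exists_mem_finset_dvd hdvd
  have hq : q.Prime := Nat.prime_of_mem_primeFactors hqmem
  have hqx : q ∣ x := hq.dvd_of_dvd_pow (Nat.dvd_of_mem_primeFactors hqmem)
  have hq5 : 5 ≤ q := prime5 q hq hqx
  have hfq2 : (x ^ 2).factorization q = 2 * x.factorization q := by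
    rw [Nat.factorization_pow]; simp
  rw [hfq2] at hqdvd
  have hple : p ≤ 2 * x.factorization q + 1 := Nat.le_of_dvd (by omega) hqdvd
  have hordx : q ^ x.factorization q ∣ x := Nat.ordProj_dvd x q
  rcases Nat.lt_or_ge (x.factorization q) ((p + 1) / 2) with hlt | hge
  · -- x.factorization q = (p-1)/2; second prime needed
    have he1 : 2 * x.factorization q + 1 = p := by omega
    have hCpos : ordCompl[q] (x ^ 2) ≠ 0 := (Nat.ordCompl_pos q hx2).ne'
    have hCnd : ¬ q ∣ ordCompl[q] (x ^ 2) := Nat.not_dvd_ordCompl hq hx2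
    have hCdvd : ordCompl[q] (x ^ 2) ∣ x ^ 2 := Nat.ordCompl_dvd (x ^ 2) q
    have hd := tau_ord hq hx2
    rw [hτ, hfq2, he1] at hd
    rw [hfq2] at hCpos hCnd hCdvd
    have htC : Finset.card (Nat.divisors (x ^ 2 / q ^ (2 * x.factorization q))) = 3 :=
      Nat.eq_of_mul_eq_mul_left hp.pos (hd.symm.trans (mul_comm 3 p))
    obtain ⟨r, hr, hCr⟩ := sq_prime_of_tau_three hCpos htC
    have hrC : r ∣ x ^ 2 / q ^ (2 * x.factorization q) := hCr ▸ dvd_pow_self r two_ne_zero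
    have hrx : r ∣ x := hr.dvd_of_dvd_pow (hrC.trans hCdvd)
    have hr5 : 5 ≤ r := prime5 r hr hrx
    have hqr : q ≠ r := by rintro rfl; exact hCnd hrC
    have hcop : Nat.Coprime (q ^ x.factorization q) r :=
      Nat.Coprime.pow_left _ ((Nat.coprime_primes hq hr).2 hqr)
    have hmul : q ^ x.factorization q * r ∣ x :=
      Nat.Coprime.mul_dvd_of_dvd_of_dvd hcop hordx hrx
    have hle : q ^ x.factorization q * r ≤ x := Nat.le_of_dvd xpos hmul
    have h5e : 5 ^ x.factorization q ≤ q ^ x.factorization q :=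
      Nat.pow_le_pow_left hq5 _
    have hP2 : (p + 1) / 2 = x.factorization q + 1 := by omega
    calc 5 ^ ((p + 1) / 2) = 5 ^ x.factorization q * 5 := by rw [hP2, pow_succ]
      _ ≤ q ^ x.factorization q * r := Nat.mul_le_mul h5e hr5
      _ ≤ x := hle
  · calc 5 ^ ((p + 1) / 2) ≤ 5 ^ x.factorization q := Nat.pow_le_pow_right (by norm_num) hge
      _ ≤ q ^ x.factorization q := Nat.pow_le_pow_left hq5 _
      _ ≤ x := Nat.le_of_dvd xpos hordx

lemma split_pp1 {q b σ t : ℕ} (hq : q.Prime) (hcop : Nat.Coprime σ t)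
    (h : σ * t = q ^ b) : (σ = 1 ∧ t = q ^ b) ∨ (σ = q ^ b ∧ t = 1) := by
  have hσd : σ ∣ q ^ b := ⟨t, h.symm⟩
  have htd : t ∣ q ^ b := ⟨σ, by rw [← h]; ring⟩
  by_cases hqσ : q ∣ σ
  · right
    have hqt : ¬ q ∣ t := fun hqt => hq.ne_one
      (Nat.eq_one_of_dvd_coprimes hcop hqσ hqt)
    obtain ⟨j, hjb, rfl⟩ := (Nat.dvd_prime_pow hq).1 htd
    have hj0 : j = 0 := by
      by_contra hj
      exact hqt (dvd_pow_self q hj)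
    subst hj0
    simp at h ⊢
    omega
  · left
    obtain ⟨j, hjb, rfl⟩ := (Nat.dvd_prime_pow hq).1 hσd
    have hj0 : j = 0 := by
      by_contra hj
      exact hqσ (dvd_pow_self q hj)
    subst hj0
    simp at h ⊢
    omega

lemma split_pp {q r a b σ t : ℕ} (hq : q.Prime) (hr : r.Prime) (hqr : q ≠ r)
    (hcop : Nat.Coprime σ t) (h : σ * t = q ^ a * r ^ b) :
    (σ = 1 ∧ t = q ^ a * r ^ b) ∨ (σ = q ^ a ∧ t = r ^ b) ∨
    (σ = r ^ b ∧ t = q ^ a) ∨ (σ = q ^ a * r ^ b ∧ t = 1) := by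
  have hpos : 0 < q ^ a * r ^ b := Nat.mul_pos (pow_pos hq.pos a) (pow_pos hr.pos b)
  have hσ0 : 0 < σ := by
    rcases Nat.eq_zero_or_pos σ with h0 | h0
    · rw [h0, zero_mul] at h; omega
    · exact h0
  have hσdvd : σ ∣ q ^ a * r ^ b := ⟨t, h.symm⟩
  have htdvd : t ∣ q ^ a * r ^ b := ⟨σ, by rw [← h]; ring⟩
  have hqa : q ^ a ∣ σ ∨ (Nat.Coprime σ (q ^ a)) := by
    by_cases hqσ : q ∣ σ
    · left
      have hqt : ¬ q ∣ t := fun hqt => hq.ne_one (Nat.eq_one_of_dvd_coprimes hcop hqσ hqt)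
      have hco : Nat.Coprime (q ^ a) t := Nat.Coprime.pow_left _ ((hq.coprime_iff_not_dvd).2 hqt)
      exact hco.dvd_of_dvd_mul_right (h ▸ dvd_mul_right (q ^ a) (r ^ b))
    · right
      exact Nat.Coprime.pow_right _ (Nat.coprime_comm.1 ((hq.coprime_iff_not_dvd).2 hqσ))
  have hrb : r ^ b ∣ σ ∨ (Nat.Coprime σ (r ^ b)) := by
    by_cases hrσ : r ∣ σ
    · left
      have hrt : ¬ r ∣ t := fun hrt => hr.ne_one (Nat.eq_one_of_dvd_coprimes hcop hrσ hrt)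
      have hco : Nat.Coprime (r ^ b) t := Nat.Coprime.pow_left _ ((hr.coprime_iff_not_dvd).2 hrt)
      exact hco.dvd_of_dvd_mul_right (by rw [h, mul_comm (q ^ a)]; exact dvd_mul_right _ _)
    · right
      exact Nat.Coprime.pow_right _ (Nat.coprime_comm.1 ((hr.coprime_iff_not_dvd).2 hrσ))
  have hqrcop : Nat.Coprime (q ^ a) (r ^ b) :=
    Nat.Coprime.pow a b ((Nat.coprime_primes hq hr).2 hqr)
  rcases hqa with hq1 | hq2 <;> rcases hrb with hr1 | hr2
  · -- both divide σ
    have hprod : q ^ a * r ^ b ∣ σ := Nat.Coprime.mul_dvd_of_dvd_of_dvd hqrcop hq1 hr1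
    have hσeq : σ = q ^ a * r ^ b := Nat.dvd_antisymm hσdvd hprod
    right; right; right
    refine ⟨hσeq, ?_⟩
    rw [hσeq] at h
    nlinarith [h, hpos]
  · -- q^a ∣ σ, σ coprime to r^b
    have hσq : σ ∣ q ^ a := (Nat.Coprime.dvd_of_dvd_mul_right hr2 hσdvd)
    have hσeq : σ = q ^ a := Nat.dvd_antisymm hσq hq1
    right; left
    refine ⟨hσeq, ?_⟩
    rw [hσeq] at h
    exact Nat.eq_of_mul_eq_mul_left (pow_pos hq.pos a) h
  · -- r^b ∣ σ, σ coprime q^a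
    have hσr : σ ∣ r ^ b := Nat.Coprime.dvd_of_dvd_mul_left hq2 hσdvd
    have hσeq : σ = r ^ b := Nat.dvd_antisymm hσr hr1
    right; right; left
    refine ⟨hσeq, ?_⟩
    rw [hσeq, mul_comm (q ^ a) (r ^ b)] at h
    exact Nat.eq_of_mul_eq_mul_left (pow_pos hr.pos b) h
  · -- σ coprime to both
    have hσ1 : σ = 1 :=
      Nat.eq_one_of_dvd_coprimes (Nat.Coprime.mul_right hq2 hr2) (dvd_refl σ) hσdvd
    left
    exact ⟨hσ1, by rw [hσ1, one_mul] at h; exact h⟩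

lemma pow2_ne (k : ℕ) : 2 ^ k ≠ 484 ∧ 2 ^ k ≠ 488 := by
  rcases Nat.lt_or_ge k 9 with h | h
  · interval_cases k <;> norm_num
  · have : 2 ^ 9 ≤ 2 ^ k := Nat.pow_le_pow_right (by norm_num) h
    norm_num at this
    omega

lemma size_bound {p : ℕ} (hpodd : p % 2 = 1) (hp5 : 5 ≤ p) :
    9 * 2 ^ (p - 3) + 2 < 5 ^ ((p + 1) / 2) := by
  obtain ⟨j, rfl⟩ : ∃ j, p = 2 * j + 5 := ⟨(p - 5) / 2, by omega⟩
  have h1 : 2 * j + 5 - 3 = 2 * (j + 1) := by omega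
  have h2 : (2 * j + 5 + 1) / 2 = j + 3 := by omega
  rw [h1, h2, pow_mul]
  norm_num
  exact ineq9 j

lemma two_sq {p n : ℕ} (hp : p.Prime) (hp3 : 3 < p) (hn4 : n % 4 = 2)
    (hτ : Finset.card (Nat.divisors n) = 6 * p) :
    ∃ x, x % 2 = 1 ∧ n = 2 * x ^ 2 ∧ n % 8 = 2 := by
  have hpodd : p % 2 = 1 := by rcases hp.eq_two_or_odd with h | h <;> omega
  have hn0 : n ≠ 0 := by omega
  have h2 : 2 ∣ n := by omega
  have h4 : ¬ 2 ^ 2 ∣ n := by rw [show (2:ℕ) ^ 2 = 4 from rfl]; omega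
  obtain ⟨c, hc2, hceq⟩ := eq_prime_mul_sq (M := 3 * p) Nat.prime_two hn0 h2 h4
    (by rw [hτ]; ring) (Nat.odd_iff.2 (by have := Nat.mul_mod 3 p 2; omega))
  have hcodd : c % 2 = 1 := by
    rcases Nat.mod_two_eq_zero_or_one c with h | h
    · exact absurd (by omega : 2 ∣ c) hc2
    · exact h
  have hsq := odd_sq_mod8 hcodd
  exact ⟨c, hcodd, hceq, by omega⟩

lemma side_split {x f c : ℕ} (hxodd : x % 2 = 1) (hx : 125 ≤ x)
    (hprod : (x - 1) * (x + 1) = 2 ^ (f - 1) * c) (hf : 4 ≤ f) (hcodd : ¬ 2 ∣ c) :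
    ∃ σ T, Nat.Coprime σ T ∧ σ * T = c ∧ ¬ 2 ∣ σ ∧
      ((x - 1 = 2 * σ ∧ x + 1 = 2 ^ (f - 2) * T) ∨
       (x + 1 = 2 * σ ∧ x - 1 = 2 ^ (f - 2) * T)) := by
  have h2f : (2:ℕ) ^ (f - 1) = 2 * 2 ^ (f - 2) := by
    rw [← pow_succ']
    congr 1
    omega
  have hx4 : x % 4 = 1 ∨ x % 4 = 3 := by omega
  have key : ∀ lo hi : ℕ, lo % 4 = 2 → lo * hi = 2 ^ (f - 1) * c → hi + 2 = lo ∨ lo + 2 = hi →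
      ∃ σ T, Nat.Coprime σ T ∧ σ * T = c ∧ ¬ 2 ∣ σ ∧
        lo = 2 * σ ∧ hi = 2 ^ (f - 2) * T := by
    intro lo hi hlo hph hd2
    obtain ⟨σ, hσ, hσodd⟩ : ∃ σ, lo = 2 * σ ∧ σ % 2 = 1 := ⟨lo / 2, by omega, by omega⟩
    have hmid : σ * hi = 2 ^ (f - 2) * c := by
      have h1 : 2 * (σ * hi) = 2 * (2 ^ (f - 2) * c) := by
        calc 2 * (σ * hi) = (2 * σ) * hi := by ring
          _ = 2 ^ (f - 1) * c := by rw [← hσ]; exact hph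
          _ = 2 * (2 ^ (f - 2) * c) := by rw [h2f]; ring
      exact Nat.eq_of_mul_eq_mul_left (by norm_num) h1
    have hcop2 : Nat.Coprime (2 ^ (f - 2)) σ :=
      Nat.Coprime.pow_left _ ((Nat.prime_two.coprime_iff_not_dvd).2 (by omega))
    have hdvd : 2 ^ (f - 2) ∣ σ * hi := by
      rw [hmid]
      exact dvd_mul_right _ _
    obtain ⟨T, hT⟩ := Nat.Coprime.dvd_of_dvd_mul_left hcop2 hdvd
    have hσT : σ * T = c := by
      have : 2 ^ (f - 2) * (σ * T) = 2 ^ (f - 2) * c := by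
        calc 2 ^ (f - 2) * (σ * T) = σ * (2 ^ (f - 2) * T) := by ring
          _ = σ * hi := by rw [← hT]
          _ = 2 ^ (f - 2) * c := hmid
      exact Nat.eq_of_mul_eq_mul_left (pow_pos (by norm_num) _) this
    have hg : Nat.Coprime σ T := by
      have hgσ : Nat.gcd σ T ∣ σ := Nat.gcd_dvd_left _ _
      have hgT : Nat.gcd σ T ∣ T := Nat.gcd_dvd_right _ _
      have hglo : Nat.gcd σ T ∣ lo := hσ ▸ (hgσ.trans (dvd_mul_left σ 2))
      have hghi : Nat.gcd σ T ∣ hi := hT ▸ (hgT.trans (dvd_mul_left T _))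
      have hg2 : Nat.gcd σ T ∣ 2 := by
        rcases hd2 with h | h
        · have := Nat.dvd_sub hglo hghi
          rwa [show lo - hi = 2 by omega] at this
        · have := Nat.dvd_sub hghi hglo
          rwa [show hi - lo = 2 by omega] at this
      rcases (Nat.dvd_prime Nat.prime_two).1 hg2 with h | h
      · exact h
      · exfalso
        have : 2 ∣ σ := h ▸ hgσ
        omega
    exact ⟨σ, T, hg, hσT, by omega, hσ, hT⟩
  rcases hx4 with h | h
  · -- x+1 ≡ 2 mod 4
    obtain ⟨σ, T, h1, h2, h3, h4, h5⟩ := key (x + 1) (x - 1) (by omega)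
      (by rw [mul_comm]; exact hprod) (by omega)
    exact ⟨σ, T, h1, h2, h3, Or.inr ⟨h4, h5⟩⟩
  · -- x-1 ≡ 2 mod 4
    obtain ⟨σ, T, h1, h2, h3, h4, h5⟩ := key (x - 1) (x + 1) (by omega) hprod (by omega)
    exact ⟨σ, T, h1, h2, h3, Or.inl ⟨h4, h5⟩⟩

lemma core {p m t : ℕ} (hp : Nat.Prime p) (hp3 : 3 < p)
    (hm4 : m % 4 = 2)
    (hTm : Finset.card (Nat.divisors m) = 6 * p)
    (hTe : Finset.card (Nat.divisors (m - 2)) = 6 * p)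
    (hTt : Finset.card (Nat.divisors t) = 6 * p)
    (hts : t = m + 3 ∨ t + 3 = m) : False := by
  have hpodd : p % 2 = 1 := by rcases hp.eq_two_or_odd with h | h <;> omega
  obtain ⟨x, hxodd, hm, hm8⟩ := two_sq hp hp3 hm4 hTm
  -- τ(x²) = 3p
  have hx2odd : ¬ 2 ∣ x ^ 2 := fun h => by
    have := Nat.prime_two.dvd_of_dvd_pow h
    omega
  have hx20 : x ^ 2 ≠ 0 := by
    intro h
    rw [h, mul_zero] at hm
    omega
  have htau2 : Finset.card (Nat.divisors 2) = 2 := by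
    have := tau_prime_pow (q := 2) (k := 1) Nat.prime_two
    simpa using this
  have htx : Finset.card (Nat.divisors (x ^ 2)) = 3 * p := by
    have hcop : Nat.Coprime 2 (x ^ 2) :=
      (Nat.prime_two.coprime_iff_not_dvd).2 hx2odd
    have := Nat.Coprime.card_divisors_mul hcop
    rw [← hm, hTm, htau2] at this
    omega
  by_cases h3x : 3 ∣ x
  · -- Case A
    obtain ⟨y, rfl⟩ := h3x
    have h9m : 9 ∣ m := by
      rw [hm]
      exact ⟨2 * y ^ 2, by ring⟩
    have h2m : 2 ∣ m := by omega
    have h3t : 3 ∣ t := by omega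
    have h9t : ¬ 3 ^ 2 ∣ t := by
      rw [show (3:ℕ) ^ 2 = 9 from rfl]
      omega
    have ht0 : t ≠ 0 := by omega
    obtain ⟨u, hu3, hueq⟩ := eq_prime_mul_sq (M := 3 * p) Nat.prime_three ht0 h3t h9t
      (by rw [hTt]; ring) (Nat.odd_iff.2 (by have := Nat.mul_mod 3 p 2; omega))
    have htodd : t % 2 = 1 := by omega
    have huodd : u % 2 = 1 := by
      rcases Nat.mod_two_eq_zero_or_one u with h | h
      · exfalso
        have : 2 ∣ u ^ 2 := Dvd.dvd.pow (by omega) two_ne_zero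
        omega
      · exact h
    have hu8 := odd_sq_mod8 huodd
    omega
  · -- Case B
    have hx2 : ¬ 2 ∣ x := by omega
    have hxlb := x_lower_bound hp hp3 hx2 h3x htx
    have hx125 : 125 ≤ x := by
      have h1 : (5:ℕ) ^ 3 ≤ 5 ^ ((p + 1) / 2) := Nat.pow_le_pow_right (by norm_num) (by omega)
      norm_num at h1
      omega
    -- the even neighbor m - 2
    have hfact : (x - 1) * (x + 1) + 1 = x ^ 2 := by
      obtain ⟨x', rfl⟩ : ∃ x', x = x' + 1 := ⟨x - 1, by omega⟩
      simp
      ring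
    have hxx : 125 * 125 ≤ x ^ 2 := by
      rw [pow_two]
      exact Nat.mul_le_mul hx125 hx125
    have he0 : m - 2 ≠ 0 := by omega
    have h2e0 : 2 ∣ m - 2 := by omega
    obtain ⟨f, c, hf1, h2c, hc0, hself, hd⟩ := ord_split Nat.prime_two he0 h2e0
    rw [hTe] at hd
    -- (x-1)(x+1) = 2^(f-1) * c
    have hprod : (x - 1) * (x + 1) = 2 ^ (f - 1) * c := by
      have h2f : (2:ℕ) ^ f = 2 * 2 ^ (f - 1) := by
        rw [← pow_succ']
        congr 1
        omega
      have h1 : 2 * ((x - 1) * (x + 1)) = 2 * (2 ^ (f - 1) * c) := by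
        calc 2 * ((x - 1) * (x + 1)) = m - 2 := by omega
          _ = 2 ^ f * c := hself
          _ = 2 * (2 ^ (f - 1) * c) := by rw [h2f]; ring
      exact Nat.eq_of_mul_eq_mul_left (by norm_num) h1
    -- f ≥ 4
    have hsq8 := odd_sq_mod8 (show x % 2 = 1 from hxodd)
    have h8 : 2 ^ 4 ∣ m - 2 := by
      rw [show (2:ℕ) ^ 4 = 16 from rfl]
      omega
    have hf4 : 4 ≤ f := by
      by_contra hlt
      rw [hself] at h8
      have hsplit : (2:ℕ) ^ 4 = 2 ^ f * 2 ^ (4 - f) := by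
        rw [← pow_add]
        congr 1
        omega
      rw [hsplit] at h8
      have h2d : 2 ^ (4 - f) ∣ c :=
        (Nat.mul_dvd_mul_iff_left (pow_pos (show 0 < 2 by norm_num) f)).1 h8
      exact h2c ((dvd_pow_self 2 (show 4 - f ≠ 0 by omega)).trans h2d)
    -- 3 ∣ c
    have hxsq3 : x ^ 2 % 3 = 1 := by
      have h3 : x % 3 = 1 ∨ x % 3 = 2 := by omega
      rw [Nat.pow_mod]
      rcases h3 with h | h <;> rw [h] <;> norm_num
    have h3e0 : 3 ∣ m - 2 := by omega
    have h3c : 3 ∣ c := by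
      have h32f : ¬ (3:ℕ) ∣ 2 ^ f := fun h => by
        have := Nat.prime_three.dvd_of_dvd_pow h
        omega
      have hcop3 : Nat.Coprime 3 (2 ^ f) := (Nat.prime_three.coprime_iff_not_dvd).2 h32f
      rw [hself] at h3e0
      exact Nat.Coprime.dvd_of_dvd_mul_left hcop3 h3e0
    have hc3 : 3 ≤ c := Nat.le_of_dvd (by omega) h3c
    have htc2 : 2 ≤ Finset.card (Nat.divisors c) := two_le_tau (by omega)
    -- p-divisibility split
    have hpdvd : p ∣ (f + 1) * Finset.card (Nat.divisors c) := ⟨6, by omega⟩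
    -- helper for terminal contradictions
    obtain ⟨σ, T, hcopσ, hσT, hσ2, hor⟩ := side_split hxodd hx125 hprod hf4 h2c
    have hsz := size_bound hpodd (by omega : 5 ≤ p)
    rcases (Nat.Prime.dvd_mul hp).1 hpdvd with hpf | hpt
    · -- p ∣ f + 1 : f+1 = p*s, s*τc = 6
      obtain ⟨s, hs⟩ := hpf
      have hst : s * Finset.card (Nat.divisors c) = 6 := by
        have h1 : p * (s * Finset.card (Nat.divisors c)) = p * 6 := by
          calc p * (s * Finset.card (Nat.divisors c))
              = (p * s) * Finset.card (Nat.divisors c) := by ring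
            _ = (f + 1) * Finset.card (Nat.divisors c) := by rw [← hs]
            _ = p * 6 := by omega
        exact Nat.eq_of_mul_eq_mul_left hp.pos h1
      have htc6 : Finset.card (Nat.divisors c) ≤ 6 := Nat.le_of_dvd (by norm_num)
        ⟨s, by rw [mul_comm]; exact hst.symm⟩
      interval_cases htcv : Finset.card (Nat.divisors c)
      · -- τ c = 2 : c = 3, f = 3p - 1
        have hcp : c.Prime := prime_of_tau_two hc0 htcv
        have hceq : c = 3 := ((Nat.prime_dvd_prime_iff_eq Nat.prime_three hcp).1 h3c).symm
        subst hceq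
        rcases split_pp1 (b := 1) Nat.prime_three hcopσ (by rw [pow_one]; exact hσT) with
          ⟨h1, _⟩ | ⟨h1, _⟩ <;> subst h1 <;> rcases hor with ⟨ha, hb⟩ | ⟨ha, hb⟩ <;> omega
      · -- τ c = 3 : c = 9
        obtain ⟨r, hr, hceq⟩ := sq_prime_of_tau_three hc0 htcv
        have hr3 : r = 3 := by
          rw [hceq] at h3c
          exact ((Nat.prime_dvd_prime_iff_eq Nat.prime_three hr).1
            (Nat.prime_three.dvd_of_dvd_pow h3c)).symm
        subst hr3
        rw [hceq] at hσT
        rcases split_pp1 (b := 2) Nat.prime_three hcopσ hσT with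
          ⟨h1, _⟩ | ⟨h1, _⟩ <;> subst h1 <;> rcases hor with ⟨ha, hb⟩ | ⟨ha, hb⟩ <;>
          simp only [show (3:ℕ) ^ 2 = 9 from rfl] at * <;> omega
      · -- τ c = 4 impossible
        omega
      · -- τ c = 5 impossible
        omega
      · -- τ c = 6 : s = 1, f = p - 1
        have hsf : f + 1 = p := by omega
        have hfp2 : f - 2 = p - 3 := by omega
        rcases tau_eq_six hc0 htcv with ⟨q, hq, hceq⟩ | ⟨q, r, hq, hr, hqr, hceq⟩
        · -- c = q^5 = 3^5 = 243
          have hq3 : q = 3 := by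
            rw [hceq] at h3c
            exact ((Nat.prime_dvd_prime_iff_eq Nat.prime_three hq).1
              (Nat.prime_three.dvd_of_dvd_pow h3c)).symm
          subst hq3
          rw [hceq] at hσT
          rcases split_pp1 (b := 5) Nat.prime_three hcopσ hσT with
            ⟨h1, h2⟩ | ⟨h1, h2⟩
          · subst h1
            rcases hor with ⟨ha, hb⟩ | ⟨ha, hb⟩ <;> omega
          · subst h1 h2
            have hpne := pow2_ne (f - 2)
            rcases hor with ⟨ha, hb⟩ | ⟨ha, hb⟩ <;>
              rw [mul_one] at hb <;>
              simp only [show (3:ℕ) ^ 5 = 243 from rfl] at ha <;> omega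
        · -- c = q^2 * r with 3 ∈ {q, r}
          have hbig : x + 1 ≤ 9 * 2 ^ (p - 3) + 2 → False := by
            intro hle
            have h5x : 5 ^ ((p + 1) / 2) ≤ x := hxlb
            omega
          rcases (Nat.Prime.dvd_mul Nat.prime_three).1 (hceq ▸ h3c) with h3q | h3r
          · -- q = 3 : c = 9 * r
            have hq3 : q = 3 :=
              ((Nat.prime_dvd_prime_iff_eq Nat.prime_three hq).1
                (Nat.prime_three.dvd_of_dvd_pow h3q)).symm
            subst hq3
            rw [hceq] at hσT
            rcases split_pp (a := 2) (b := 1) Nat.prime_three hr hqr hcopσ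
              (by rw [pow_one]; exact hσT) with
              ⟨h1, h2⟩ | ⟨h1, h2⟩ | ⟨h1, h2⟩ | ⟨h1, h2⟩
            · subst h1
              rcases hor with ⟨ha, hb⟩ | ⟨ha, hb⟩ <;> omega
            · subst h1
              rcases hor with ⟨ha, hb⟩ | ⟨ha, hb⟩ <;>
                simp only [show (3:ℕ) ^ 2 = 9 from rfl] at ha <;> omega
            · -- σ = r, T = 9 : big side 9 * 2^(p-3)
              subst h2
              apply hbig
              have h9 : 2 ^ (f - 2) * 3 ^ 2 = 9 * 2 ^ (p - 3) := by
                rw [hfp2]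
                ring
              rcases hor with ⟨ha, hb⟩ | ⟨ha, hb⟩ <;> rw [h9] at hb <;> omega
            · -- σ = 9r, T = 1 : big side 2^(p-3)
              subst h2
              apply hbig
              have h9 : (2:ℕ) ^ (f - 2) * 1 = 2 ^ (p - 3) := by rw [hfp2, mul_one]
              have hmono : (2:ℕ) ^ (p - 3) ≤ 9 * 2 ^ (p - 3) := by omega
              rcases hor with ⟨ha, hb⟩ | ⟨ha, hb⟩ <;> rw [h9] at hb <;> omega
          · -- r = 3 : c = q^2 * 3
            have hr3 : r = 3 :=
              ((Nat.prime_dvd_prime_iff_eq Nat.prime_three hr).1 h3r).symm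
            subst hr3
            rw [hceq] at hσT
            rcases split_pp (a := 2) (b := 1) hq Nat.prime_three hqr hcopσ
              (by rw [pow_one]; exact hσT) with
              ⟨h1, h2⟩ | ⟨h1, h2⟩ | ⟨h1, h2⟩ | ⟨h1, h2⟩
            · subst h1
              rcases hor with ⟨ha, hb⟩ | ⟨ha, hb⟩ <;> omega
            · -- σ = q^2, T = 3 : big side 3 * 2^(p-3)
              subst h2
              apply hbig
              have h9 : 2 ^ (f - 2) * 3 = 3 * 2 ^ (p - 3) := by rw [hfp2]; ring
              have hmono : 3 * (2:ℕ) ^ (p - 3) ≤ 9 * 2 ^ (p - 3) := by omega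
              rcases hor with ⟨ha, hb⟩ | ⟨ha, hb⟩ <;> rw [pow_one, h9] at hb <;> omega
            · -- σ = 3, T = q^2 : side 6
              subst h1
              rcases hor with ⟨ha, hb⟩ | ⟨ha, hb⟩ <;> omega
            · -- σ = c, T = 1 : big side 2^(p-3)
              subst h2
              apply hbig
              have h9 : (2:ℕ) ^ (f - 2) * 1 = 2 ^ (p - 3) := by rw [hfp2, mul_one]
              have hmono : (2:ℕ) ^ (p - 3) ≤ 9 * 2 ^ (p - 3) := by omega
              rcases hor with ⟨ha, hb⟩ | ⟨ha, hb⟩ <;> rw [h9] at hb <;> omega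
    · -- p ∣ τ c : f = 5, c = 3^(p-1)
      obtain ⟨T', hT'⟩ := hpt
      have hT6 : (f + 1) * T' = 6 := by
        have h1 : p * ((f + 1) * T') = p * 6 := by
          calc p * ((f + 1) * T') = (f + 1) * (p * T') := by ring
            _ = (f + 1) * Finset.card (Nat.divisors c) := by rw [← hT']
            _ = p * 6 := by omega
        exact Nat.eq_of_mul_eq_mul_left hp.pos h1
      have hf5 : f = 5 ∧ T' = 1 := by
        have hle : f + 1 ≤ 6 := Nat.le_of_dvd (by norm_num) ⟨T', hT6.symm⟩
        have : f + 1 = 5 ∨ f + 1 = 6 := by omega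
        rcases this with h | h <;> rw [h] at hT6 <;> omega
      obtain ⟨hf5', hT'1⟩ := hf5
      subst hT'1
      have htcp : Finset.card (Nat.divisors c) = p := by omega
      obtain ⟨q, hq, hceq⟩ := tau_eq_prime hc0 hp htcp
      have hq3 : q = 3 := by
        rw [hceq] at h3c
        exact ((Nat.prime_dvd_prime_iff_eq Nat.prime_three hq).1
          (Nat.prime_three.dvd_of_dvd_pow h3c)).symm
      subst hq3
      rw [hceq] at hσT
      rcases split_pp1 (b := p - 1) Nat.prime_three hcopσ hσT with
        ⟨h1, h2⟩ | ⟨h1, h2⟩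
      · subst h1
        rcases hor with ⟨ha, hb⟩ | ⟨ha, hb⟩ <;> omega
      · subst h1 h2
        have h8 : (2:ℕ) ^ (f - 2) * 1 = 8 := by rw [hf5']; norm_num
        rcases hor with ⟨ha, hb⟩ | ⟨ha, hb⟩ <;> rw [h8] at hb <;> omega

theorem M_six_p_le_five (p : ℕ) (hp : p.Prime) (hp3 : 3 < p) :
    ∀ n : ℕ, 0 < n → ¬ (∀ i < 6, (n + i).divisors.card = 6 * p) := by
  intro n hn hall
  have h0 := hall 0 (by norm_num)
  have h1 := hall 1 (by norm_num)
  have h2 := hall 2 (by norm_num)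
  have h3 := hall 3 (by norm_num)
  have h4 := hall 4 (by norm_num)
  have h5 := hall 5 (by norm_num)
  rw [Nat.add_zero] at h0
  rcases Nat.mod_two_eq_zero_or_one n with hpar | hpar
  · -- n even, E = n
    have hE4 : ¬ n % 4 = 2 := by
      intro hEm
      obtain ⟨x1, _, _, hx8⟩ := two_sq hp hp3 hEm h0
      have hEm4 : (n + 4) % 4 = 2 := by omega
      obtain ⟨x2, _, _, hx8'⟩ := two_sq hp hp3 hEm4 h4
      omega
    -- m = n + 2
    have hm4 : (n + 2) % 4 = 2 := by omega
    exact core hp hp3 hm4 h2 (by rw [show n + 2 - 2 = n from rfl]; exact h0)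
      h5 (Or.inl (by omega))
  · -- n odd, E = n + 1
    have hE4 : ¬ (n + 1) % 4 = 2 := by
      intro hEm
      obtain ⟨x1, _, _, hx8⟩ := two_sq hp hp3 hEm h1
      have hEm4 : (n + 5) % 4 = 2 := by omega
      obtain ⟨x2, _, _, hx8'⟩ := two_sq hp hp3 hEm4 h5
      omega
    -- m = n + 3
    have hm4 : (n + 3) % 4 = 2 := by omega
    exact core hp hp3 hm4 h3 (by rw [show n + 3 - 2 = n + 1 by omega]; exact h1)
      h0 (Or.inr (by omega))
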